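/- Define f(t) = −(1/2)·ln((5 + 4cos t)/9) for t with cos t > −1/2 and f(t) = −(1/2)·ln((2 − 2cos t)/9) for t with cos t < −1/2, extended by continuity to t = 2π/3 (where both formulas give the value (1/2)·ln 3). Then f is continuous at t = 2π/3 but not differentiable there: its left derivative at 2π/3 equals √3/3 while its right derivative equals −√3/6. Hence the dynamical quantum phase transition of the periodic 3-state Potts chain at t_c = 2π/3 is first order (a slope discontinuity of the rate function). -/

import Mathlib

/-!
The two moduli satisfy `|e^{it} + 2|² = 5 + 4 cos t` and `|e^{it} − 1|² = 2 − 2 cos t`, which cross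
at `cos t = −1/2`. Near `2π/3` the rate function is therefore `ln 3 − ½ ln` of one smooth branch on
each side; both branches equal `3` at `2π/3`, but their slopes `−4 sin t = −2√3` and
`2 sin t = √3` differ, giving the one-sided derivatives `√3/3` and `−√3/6`.
-/

open Complex Real

/-- The thermodynamic-limit Loschmidt rate function per bond of the periodic
3-state Potts chain: `f(t) = ln 3 − ln max(|e^{it}+2|, |e^{it}−1|)`, which is
the continuous extension of the two piecewise formulas. -/
noncomputable def pottsRate (t : ℝ) : ℝ :=
  Real.log 3 -
    Real.log (max (‖Complex.exp (t * I) + 2‖)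
                  (‖Complex.exp (t * I) - 1‖))

open Set

lemma not_differentiableAt_of_hasDerivWithinAt_Iic_Ici {F : Type*} [NormedAddCommGroup F]
    [NormedSpace ℝ F] {f : ℝ → F} {a b : F} {x : ℝ}
    (ha : HasDerivWithinAt f a (Iic x) x) (hb : HasDerivWithinAt f b (Ici x) x) (hab : a ≠ b) :
    ¬DifferentiableAt ℝ f x := fun hf =>
  hab <| ((uniqueDiffOn_Iic x x self_mem_Iic).eq_deriv _ ha hf.hasDerivAt.hasDerivWithinAt).trans
    ((uniqueDiffOn_Ici x x self_mem_Ici).eq_deriv _ hb hf.hasDerivAt.hasDerivWithinAt).symm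

lemma log_three_sub_half_log {x : ℝ} (hx : x ≠ 0) :
    Real.log 3 - Real.log x / 2 = -(1 / 2) * Real.log (x / 9) := by
  rw [Real.log_div hx (by norm_num), show (9 : ℝ) = 3 ^ 2 by norm_num, Real.log_pow]
  ring

lemma norm_exp_ofReal_mul_I_add_ofReal (t a : ℝ) :
    ‖exp (t * I) + a‖ = √(1 + 2 * a * Real.cos t + a ^ 2) := by
  rw [Complex.norm_def, Complex.normSq_apply]
  congr 1
  simp only [add_re, add_im, exp_ofReal_mul_I_re, exp_ofReal_mul_I_im, ofReal_re, ofReal_im]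
  nlinarith [Real.sin_sq_add_cos_sq t]

lemma cos_two_pi_div_three : Real.cos (2 * π / 3) = -(1 / 2) := by
  rw [show 2 * π / 3 = π - π / 3 by ring, Real.cos_pi_sub, Real.cos_pi_div_three]

lemma sin_two_pi_div_three : Real.sin (2 * π / 3) = √3 / 2 := by
  rw [show 2 * π / 3 = π - π / 3 by ring, Real.sin_pi_sub, Real.sin_pi_div_three]

lemma neg_half_le_cos_of_le_two_pi_div_three {t : ℝ} (h₀ : 0 ≤ t) (h : t ≤ 2 * π / 3) :
    -(1 / 2) ≤ Real.cos t :=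
  cos_two_pi_div_three ▸ Real.cos_le_cos_of_nonneg_of_le_pi h₀ (by linarith [Real.pi_pos]) h

lemma cos_le_neg_half_of_two_pi_div_three_le {t : ℝ} (h : 2 * π / 3 ≤ t) (hπ : t ≤ π) :
    Real.cos t ≤ -(1 / 2) :=
  cos_two_pi_div_three ▸ Real.cos_le_cos_of_nonneg_of_le_pi (by positivity) hπ h

/-- `9 |λ|²` for the dominant eigenvalue `λ` of the transfer matrix, whose eigenvalues are
`(e^{it} + 2)/3` and `(e^{it} − 1)/3`. -/
noncomputable def pottsDominantSq (t : ℝ) : ℝ := max (5 + 4 * Real.cos t) (2 - 2 * Real.cos t)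

lemma pottsDominantSq_pos (t : ℝ) : 0 < pottsDominantSq t :=
  lt_max_of_lt_left (by nlinarith [Real.neg_one_le_cos t])

lemma pottsDominantSq_of_neg_half_le {t : ℝ} (h : -(1 / 2) ≤ Real.cos t) :
    pottsDominantSq t = 5 + 4 * Real.cos t :=
  max_eq_left (by linarith)

lemma pottsDominantSq_of_le_neg_half {t : ℝ} (h : Real.cos t ≤ -(1 / 2)) :
    pottsDominantSq t = 2 - 2 * Real.cos t :=
  max_eq_right (by linarith)

lemma pottsDominantSq_two_pi_div_three : pottsDominantSq (2 * π / 3) = 3 := by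
  rw [pottsDominantSq_of_neg_half_le cos_two_pi_div_three.ge, cos_two_pi_div_three]
  norm_num

lemma pottsRate_eq (t : ℝ) : pottsRate t = Real.log 3 - Real.log (pottsDominantSq t) / 2 := by
  have h₁ : ‖exp (t * I) + 2‖ = √(5 + 4 * Real.cos t) := by
    rw [show (2 : ℂ) = ((2 : ℝ) : ℂ) by norm_num, norm_exp_ofReal_mul_I_add_ofReal]
    ring_nf
  have h₂ : ‖exp (t * I) - 1‖ = √(2 - 2 * Real.cos t) := by
    rw [sub_eq_add_neg, show -(1 : ℂ) = ((-1 : ℝ) : ℂ) by norm_num,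
      norm_exp_ofReal_mul_I_add_ofReal]
    ring_nf
  rw [pottsRate, h₁, h₂, ← Real.sqrt_monotone.map_max]
  exact congrArg (Real.log 3 - ·) (Real.log_sqrt (pottsDominantSq_pos t).le)

lemma hasDerivWithinAt_pottsRate {d t : ℝ} {s : Set ℝ}
    (h : HasDerivWithinAt pottsDominantSq d s t) :
    HasDerivWithinAt pottsRate (-d / (2 * pottsDominantSq t)) s t := by
  rw [show pottsRate = fun t => Real.log 3 - Real.log (pottsDominantSq t) / 2 from
    funext pottsRate_eq]
  exact (((h.log (pottsDominantSq_pos t).ne').div_const 2).const_sub (Real.log 3)).congr_deriv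
    (by ring)

lemma hasDerivWithinAt_pottsDominantSq_Iic :
    HasDerivWithinAt pottsDominantSq (-(2 * √3)) (Iic (2 * π / 3)) (2 * π / 3) := by
  have hderiv := (((Real.hasDerivAt_cos (2 * π / 3)).const_mul 4).const_add 5).hasDerivWithinAt
    (s := Iic (2 * π / 3))
  rw [sin_two_pi_div_three] at hderiv
  refine (hderiv.congr_of_eventuallyEq_of_mem ?_ self_mem_Iic).congr_deriv (by ring)
  filter_upwards [self_mem_nhdsWithin, nhdsWithin_le_nhds (Ioi_mem_nhds (by positivity))]
    with t (ht : t ≤ 2 * π / 3) (ht₀ : 0 < t)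
  exact pottsDominantSq_of_neg_half_le (neg_half_le_cos_of_le_two_pi_div_three ht₀.le ht)

lemma hasDerivWithinAt_pottsDominantSq_Ici :
    HasDerivWithinAt pottsDominantSq √3 (Ici (2 * π / 3)) (2 * π / 3) := by
  have hderiv := (((Real.hasDerivAt_cos (2 * π / 3)).const_mul 2).const_sub 2).hasDerivWithinAt
    (s := Ici (2 * π / 3))
  rw [sin_two_pi_div_three] at hderiv
  refine (hderiv.congr_of_eventuallyEq_of_mem ?_ self_mem_Ici).congr_deriv (by ring)
  filter_upwards [self_mem_nhdsWithin,
    nhdsWithin_le_nhds (Iio_mem_nhds (by linarith [Real.pi_pos] : 2 * π / 3 < π))]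
    with t (ht : 2 * π / 3 ≤ t) (htπ : t < π)
  exact pottsDominantSq_of_le_neg_half (cos_le_neg_half_of_two_pi_div_three_le ht htπ.le)

/-- `f` agrees with the two piecewise formulas, takes the value `(1/2)·ln 3` at
`t = 2π/3`, is continuous there but not differentiable: the left derivative is
`√3/3` while the right derivative is `−√3/6`. The DQPT at `t_c = 2π/3` is thus
first order (slope discontinuity of the rate function). -/
theorem stmt_14 :
    (∀ t : ℝ, Real.cos t > -(1 / 2) →
      pottsRate t = -(1 / 2) * Real.log ((5 + 4 * Real.cos t) / 9)) ∧
    (∀ t : ℝ, Real.cos t < -(1 / 2) →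
      pottsRate t = -(1 / 2) * Real.log ((2 - 2 * Real.cos t) / 9)) ∧
    pottsRate (2 * π / 3) = (1 / 2) * Real.log 3 ∧
    ContinuousAt pottsRate (2 * π / 3) ∧
    HasDerivWithinAt pottsRate (Real.sqrt 3 / 3) (Set.Iic (2 * π / 3)) (2 * π / 3) ∧
    HasDerivWithinAt pottsRate (-(Real.sqrt 3) / 6) (Set.Ici (2 * π / 3)) (2 * π / 3) ∧
    ¬ DifferentiableAt ℝ pottsRate (2 * π / 3) := by
  have hleft : HasDerivWithinAt pottsRate (√3 / 3) (Iic (2 * π / 3)) (2 * π / 3) := by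
    convert hasDerivWithinAt_pottsRate hasDerivWithinAt_pottsDominantSq_Iic using 1
    rw [pottsDominantSq_two_pi_div_three]
    ring
  have hright : HasDerivWithinAt pottsRate (-√3 / 6) (Ici (2 * π / 3)) (2 * π / 3) := by
    convert hasDerivWithinAt_pottsRate hasDerivWithinAt_pottsDominantSq_Ici using 1
    rw [pottsDominantSq_two_pi_div_three]
    ring
  have hsqrt3 : 0 < √3 := by positivity
  refine ⟨fun t ht => ?_, fun t ht => ?_, ?_,
    continuousAt_iff_continuous_left_right.2 ⟨hleft.continuousWithinAt, hright.continuousWithinAt⟩,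
    hleft, hright, not_differentiableAt_of_hasDerivWithinAt_Iic_Ici hleft hright (by linarith)⟩
  · rw [pottsRate_eq, pottsDominantSq_of_neg_half_le ht.le,
      log_three_sub_half_log (by nlinarith [Real.neg_one_le_cos t])]
  · rw [pottsRate_eq, pottsDominantSq_of_le_neg_half ht.le, log_three_sub_half_log (by linarith)]
  · rw [pottsRate_eq, pottsDominantSq_two_pi_div_three]
    ring
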